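/- Let m be an odd positive integer ≥ 3 such that 2^l ≡ −1 (mod m) for some positive integer l, and let n be an odd positive integer. Then there is no algebraic integer α ∈ Z[ζ_m] with α·conj(α) = 2^n. Consequently there is no generalized bent function of type {m, n} or {2m, n}. -/

import Mathlib

open Finset

/-- The primitive `m`-th root of unity `e^{2πi/m}`. -/
noncomputable def zeta (m : ℕ) : ℂ := Complex.exp (2 * Real.pi * Complex.I / m)

/-- The inner product `x·y = Σ xᵢ yᵢ` in `Z₂`. -/
def bdot {n : ℕ} (x y : Fin n → ZMod 2) : ZMod 2 := ∑ i, x i * y i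

/-- The Fourier coefficient `W_f(y) = Σ_x (-1)^{x·y} ζ_m^{f(x)}`. -/
noncomputable def Wf {n m : ℕ} (f : (Fin n → ZMod 2) → ZMod m) (y : Fin n → ZMod 2) : ℂ :=
  ∑ x : Fin n → ZMod 2, (-1 : ℂ) ^ (bdot x y).val * zeta m ^ (f x).val

/-- `f : Z₂ⁿ → Z_m` is a generalized bent function of type `{m,n}` if
`|W_f(y)| = 2^{n/2}` for all `y`. -/
def IsGBF {n m : ℕ} (f : (Fin n → ZMod 2) → ZMod m) : Prop :=
  ∀ y : Fin n → ZMod 2, ‖Wf f y‖ = (2 : ℝ) ^ ((n : ℝ) / 2)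

/-!
Let `𝒪 = ℤ[ζ_m]`. Writing elements of `𝒪` as `P(ζ_m)` with `P ∈ ℤ[X]`, one has
`𝒪 / 2𝒪 ≅ 𝔽₂[X] / (Φ_m)`; since `m` is odd, `Φ_m` is squarefree over `𝔽₂`, so `2𝒪` is a
radical ideal, and it is proper. Because `2^l ≡ -1 (mod m)`, complex conjugation sends `ζ_m` to
`ζ_m^(2^l)`, hence agrees with `x ↦ x^(2^l)` modulo `2`. If `α ᾱ = 2^n` with `n ≥ 1`, then
`α^(2^l+1) ≡ α ᾱ ≡ 0 (mod 2)`, so `α = 2β` and `β β̄ = 2^(n-2)`. Descending along odd `n` ends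
with `2 β β̄ = 1`, which would make `2` a unit of `𝒪`.

For a GBF `f` of type `{m,n}` or `{2m,n}` (note `ζ_{2m} = -ζ_m^((m+1)/2)`), `α = W_f(0) ∈ 𝒪`
satisfies `α ᾱ = |W_f(0)|² = 2^n`.
-/

open Polynomial

section TwoDivisibility

variable {R : Type*} [CommRing R]

theorem two_dvd_of_mul_map_eq_two_pow {σ : R →+* R} {l : ℕ} (hσ : ∀ x, 2 ∣ σ x - x ^ 2 ^ l)
    (hrad : (Ideal.span {(2 : R)}).IsRadical) {α : R} {n : ℕ} (hn : n ≠ 0)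
    (h : α * σ α = 2 ^ n) : 2 ∣ α := by
  have hpow : α ^ (2 ^ l + 1) = α * σ α - α * (σ α - α ^ 2 ^ l) := by ring
  have hdvd : 2 ∣ α ^ (2 ^ l + 1) := by
    rw [hpow, h]
    exact dvd_sub (dvd_pow_self 2 hn) (dvd_mul_of_dvd_right (hσ α) α)
  exact Ideal.mem_span_singleton.mp (hrad ⟨_, Ideal.mem_span_singleton.mpr hdvd⟩)

theorem mul_map_ne_two_pow_of_odd [IsDomain R] [CharZero R] {σ : R →+* R} {l : ℕ}
    (hσ : ∀ x, 2 ∣ σ x - x ^ 2 ^ l) (hrad : (Ideal.span {(2 : R)}).IsRadical)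
    (h2 : ¬ IsUnit (2 : R)) {n : ℕ} (hn : Odd n) (α : R) : α * σ α ≠ 2 ^ n := by
  obtain ⟨k, rfl⟩ := hn
  induction k generalizing α with
  | zero =>
    intro h
    obtain ⟨β, rfl⟩ := two_dvd_of_mul_map_eq_two_pow hσ hrad one_ne_zero h
    rw [map_mul, map_ofNat] at h
    exact h2 (IsUnit.of_mul_eq_one (β * σ β)
      (mul_left_cancel₀ two_ne_zero (by linear_combination h)))
  | succ k ih =>
    intro h
    obtain ⟨β, rfl⟩ := two_dvd_of_mul_map_eq_two_pow hσ hrad (Nat.succ_ne_zero _) h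
    rw [map_mul, map_ofNat] at h
    exact ih β (mul_left_cancel₀ (by norm_num : (4 : R) ≠ 0) (by linear_combination h))

end TwoDivisibility

theorem ZMod.expand_card_pow {p : ℕ} [Fact p.Prime] (l : ℕ) (f : (ZMod p)[X]) :
    expand (ZMod p) (p ^ l) f = f ^ p ^ l := by
  induction l with
  | zero => simp
  | succ l ih => rw [pow_succ', expand_mul, ih, ZMod.expand_card, ← pow_mul, mul_comm]

theorem Polynomial.C_dvd_of_map_intCast_eq_zero {n : ℕ} {P : ℤ[X]}
    (h : P.map (Int.castRingHom (ZMod n)) = 0) : C (n : ℤ) ∣ P := by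
  have hker : P ∈ RingHom.ker (mapRingHom (Int.castRingHom (ZMod n))) := h
  rwa [ker_mapRingHom, ZMod.ker_intCastRingHom, Ideal.map_span, Set.image_singleton,
    Ideal.mem_span_singleton] at hker

theorem IsPrimitiveRoot.conj_eq_pow {ζ : ℂ} {m k : ℕ} [NeZero m] (hζ : IsPrimitiveRoot ζ m)
    (hk : (k : ZMod m) = -1) : starRingEnd ℂ ζ = ζ ^ k := by
  have hconj : starRingEnd ℂ ζ * ζ = 1 := by
    rw [Complex.conj_mul', hζ.norm'_eq_one (NeZero.ne m)]
    norm_num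
  have hpow : ζ ^ k * ζ = 1 := by
    rw [← pow_succ, hζ.pow_eq_one_iff_dvd, ← ZMod.natCast_eq_zero_iff]
    push_cast [hk]
    ring
  exact mul_right_cancel₀ (hζ.ne_zero (NeZero.ne m)) (hconj.trans hpow.symm)

theorem isPrimitiveRoot_zeta (m : ℕ) [NeZero m] : IsPrimitiveRoot (zeta m) m := by
  simpa [zeta] using Complex.isPrimitiveRoot_exp m (NeZero.ne m)

section CyclotomicIntegers

variable {m : ℕ}

local notation "𝒪" => Algebra.adjoin ℤ ({zeta m} : Set ℂ)

variable (m) in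
noncomputable def zetaInt : 𝒪 :=
  ⟨zeta m, Algebra.self_mem_adjoin_singleton ℤ _⟩

theorem aeval_zetaInt_surjective : Function.Surjective (aeval (zetaInt m) : ℤ[X] → 𝒪) := by
  rintro ⟨x, hx⟩
  rw [Algebra.adjoin_singleton_eq_range_aeval] at hx
  obtain ⟨P, rfl⟩ := hx
  exact ⟨P, Subtype.ext (aeval_subalgebra_coe P _ (zetaInt m))⟩

variable [NeZero m]

theorem conj_mem_adjoin_zeta {x : ℂ} (hx : x ∈ 𝒪) : starRingEnd ℂ x ∈ 𝒪 := by
  have hζ : starRingEnd ℂ (zeta m) ∈ 𝒪 := by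
    rw [(isPrimitiveRoot_zeta m).conj_eq_pow (k := m - 1)
      (by rw [Nat.cast_pred (Nat.pos_of_neZero m), ZMod.natCast_self, zero_sub])]
    exact pow_mem (Algebra.self_mem_adjoin_singleton ℤ _) _
  have hle : 𝒪 ≤ (Algebra.adjoin ℤ {zeta m}).comap (starRingEnd ℂ).toIntAlgHom :=
    Algebra.adjoin_le (Set.singleton_subset_iff.mpr hζ)
  exact hle hx

variable (m) in
def conjInt : 𝒪 →+* 𝒪 :=
  (starRingEnd ℂ).restrict _ _ fun _ => conj_mem_adjoin_zeta

theorem aeval_zetaInt_eq_zero_iff (P : ℤ[X]) :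
    aeval (zetaInt m) P = 0 ↔ cyclotomic m ℤ ∣ P := by
  have hζ := isPrimitiveRoot_zeta m
  have hval : aeval (zetaInt m) P = 0 ↔ aeval (zeta m) P = 0 := by
    rw [← ZeroMemClass.coe_eq_zero, aeval_subalgebra_coe]
    rfl
  rw [hval, cyclotomic_eq_minpoly hζ (Nat.pos_of_neZero m)]
  refine ⟨minpoly.isIntegrallyClosed_dvd (hζ.isIntegral (Nat.pos_of_neZero m)), ?_⟩
  rintro ⟨Q, rfl⟩
  rw [map_mul, minpoly.aeval, zero_mul]

theorem two_dvd_aeval_zetaInt_iff (P : ℤ[X]) :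
    2 ∣ aeval (zetaInt m) P ↔ cyclotomic m (ZMod 2) ∣ P.map (Int.castRingHom (ZMod 2)) := by
  constructor
  · rintro ⟨y, hy⟩
    obtain ⟨Q, rfl⟩ := aeval_zetaInt_surjective y
    have hdvd : cyclotomic m ℤ ∣ P - 2 * Q :=
      (aeval_zetaInt_eq_zero_iff _).mp (by rw [map_sub, map_mul, hy, map_ofNat, sub_self])
    simpa [map_cyclotomic, CharTwo.two_eq_zero] using
      Polynomial.map_dvd (Int.castRingHom (ZMod 2)) hdvd
  · rintro ⟨W, hW⟩
    obtain ⟨W, rfl⟩ := map_surjective (Int.castRingHom (ZMod 2)) ZMod.intCast_surjective W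
    obtain ⟨B, hB⟩ := C_dvd_of_map_intCast_eq_zero (n := 2) (P := P - cyclotomic m ℤ * W)
      (by simp [hW, map_cyclotomic])
    refine ⟨aeval (zetaInt m) B, ?_⟩
    rw [sub_eq_iff_eq_add] at hB
    rw [hB, map_add, map_mul, map_mul, (aeval_zetaInt_eq_zero_iff _).mpr dvd_rfl, zero_mul,
      add_zero, aeval_C]
    simp

theorem not_isUnit_two_adjoin_zeta : ¬ IsUnit (2 : 𝒪) := by
  rw [isUnit_iff_dvd_one, ← map_one (aeval (R := ℤ) (zetaInt m)), two_dvd_aeval_zetaInt_iff,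
    Polynomial.map_one, ← isUnit_iff_dvd_one]
  refine not_isUnit_of_natDegree_pos _ ?_
  rw [natDegree_cyclotomic]
  exact Nat.totient_pos.mpr (Nat.pos_of_neZero m)

theorem isRadical_span_two_adjoin_zeta (hm : Odd m) : (Ideal.span {(2 : 𝒪)}).IsRadical := by
  rintro x ⟨j, hj⟩
  obtain ⟨P, rfl⟩ := aeval_zetaInt_surjective x
  rw [Ideal.mem_span_singleton, ← map_pow, two_dvd_aeval_zetaInt_iff, Polynomial.map_pow] at hj
  rw [Ideal.mem_span_singleton, two_dvd_aeval_zetaInt_iff]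
  have : NeZero (m : ZMod 2) :=
    ⟨by rwa [Ne, ZMod.natCast_eq_zero_iff_even, Nat.not_even_iff_odd]⟩
  rcases eq_or_ne j 0 with rfl | hj0
  · exact (isUnit_of_dvd_one (by simpa using hj)).dvd
  · exact ((squarefree_cyclotomic m (ZMod 2)).dvd_pow_iff_dvd hj0).mp hj

theorem conjInt_zetaInt {l : ℕ} (hl : (2 : ZMod m) ^ l = -1) :
    conjInt m (zetaInt m) = zetaInt m ^ 2 ^ l :=
  Subtype.ext ((isPrimitiveRoot_zeta m).conj_eq_pow (by push_cast; exact hl))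

theorem two_dvd_conjInt_sub_pow {l : ℕ} (hl : (2 : ZMod m) ^ l = -1) (x : 𝒪) :
    2 ∣ conjInt m x - x ^ 2 ^ l := by
  obtain ⟨P, rfl⟩ := aeval_zetaInt_surjective x
  have hconj : conjInt m (aeval (zetaInt m) P) = aeval (zetaInt m) (expand ℤ (2 ^ l) P) := by
    rw [expand_aeval, ← conjInt_zetaInt hl]
    exact (aeval_algHom_apply (conjInt m).toIntAlgHom _ _).symm
  rw [hconj, ← map_pow, ← map_sub, two_dvd_aeval_zetaInt_iff, Polynomial.map_sub,
    Polynomial.map_pow, map_expand, ZMod.expand_card_pow, sub_self]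
  exact dvd_zero _

theorem not_exists_mul_conj_eq_two_pow (hm : Odd m) {l : ℕ} (hl : (2 : ZMod m) ^ l = -1)
    {n : ℕ} (hn : Odd n) : ¬ ∃ α ∈ 𝒪, α * starRingEnd ℂ α = 2 ^ n := by
  rintro ⟨α, hα, h⟩
  refine mul_map_ne_two_pow_of_odd (two_dvd_conjInt_sub_pow hl)
    (isRadical_span_two_adjoin_zeta hm) not_isUnit_two_adjoin_zeta hn ⟨α, hα⟩ ?_
  exact Subtype.ext h

end CyclotomicIntegers

theorem zeta_two_mul_sq (m : ℕ) : zeta (2 * m) ^ 2 = zeta m := by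
  rw [zeta, zeta, ← Complex.exp_nat_mul]
  congr 1
  push_cast
  ring

theorem zeta_two_mul_pow_self {m : ℕ} (hm : m ≠ 0) : zeta (2 * m) ^ m = -1 := by
  rw [zeta, ← Complex.exp_nat_mul, ← Complex.exp_pi_mul_I]
  congr 1
  push_cast
  field_simp

theorem zeta_two_mul_mem_adjoin {m : ℕ} (hm : Odd m) :
    zeta (2 * m) ∈ Algebra.adjoin ℤ ({zeta m} : Set ℂ) := by
  have hω := zeta_two_mul_pow_self hm.pos.ne'
  obtain ⟨j, rfl⟩ := hm
  have h : zeta (2 * (2 * j + 1)) = -zeta (2 * j + 1) ^ (j + 1) := by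
    rw [← zeta_two_mul_sq (2 * j + 1)]
    linear_combination zeta (2 * (2 * j + 1)) * hω
  rw [h]
  exact neg_mem (pow_mem (Algebra.self_mem_adjoin_singleton ℤ _) _)

theorem Wf_mem {n M : ℕ} {S : Subalgebra ℤ ℂ} (hζ : zeta M ∈ S)
    (f : (Fin n → ZMod 2) → ZMod M) (y : Fin n → ZMod 2) : Wf f y ∈ S :=
  Subalgebra.sum_mem _ fun _ _ => mul_mem (pow_mem (neg_mem (one_mem _)) _) (pow_mem hζ _)

theorem IsGBF.Wf_mul_conj {n M : ℕ} {f : (Fin n → ZMod 2) → ZMod M} (hf : IsGBF f)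
    (y : Fin n → ZMod 2) : Wf f y * starRingEnd ℂ (Wf f y) = 2 ^ n := by
  have hsq : ((2 : ℝ) ^ ((n : ℝ) / 2)) ^ 2 = 2 ^ n := by
    rw [← Real.rpow_mul_natCast (by norm_num)]
    norm_num
  rw [Complex.mul_conj', hf y]
  exact_mod_cast hsq

theorem stmt10_general {m n : ℕ} (hm : Odd m)
    (h : ∃ l : ℕ, 0 < l ∧ (2 : ZMod m) ^ l = -1)
    (hn : Odd n) :
    (¬ ∃ α ∈ Algebra.adjoin ℤ ({zeta m} : Set ℂ), α * (starRingEnd ℂ) α = 2 ^ n) ∧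
    (¬ ∃ f : (Fin n → ZMod 2) → ZMod m, IsGBF f) ∧
    (¬ ∃ f : (Fin n → ZMod 2) → ZMod (2 * m), IsGBF f) := by
  obtain ⟨l, -, hl⟩ := h
  have : NeZero m := ⟨hm.pos.ne'⟩
  have hα := not_exists_mul_conj_eq_two_pow hm hl hn
  refine ⟨hα, ?_, ?_⟩
  · rintro ⟨f, hf⟩
    exact hα ⟨_, Wf_mem (Algebra.self_mem_adjoin_singleton ℤ _) f 0, hf.Wf_mul_conj 0⟩
  · rintro ⟨f, hf⟩
    exact hα ⟨_, Wf_mem (zeta_two_mul_mem_adjoin hm) f 0, hf.Wf_mul_conj 0⟩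

theorem stmt10 {m n : ℕ} (hm : Odd m) (hm3 : 3 ≤ m)
    (h : ∃ l : ℕ, 0 < l ∧ (2 : ZMod m) ^ l = -1)
    (hn : Odd n) (hn1 : 1 ≤ n) :
    (¬ ∃ α ∈ Algebra.adjoin ℤ ({zeta m} : Set ℂ), α * (starRingEnd ℂ) α = 2 ^ n) ∧
    (¬ ∃ f : (Fin n → ZMod 2) → ZMod m, IsGBF f) ∧
    (¬ ∃ f : (Fin n → ZMod 2) → ZMod (2 * m), IsGBF f) :=
  stmt10_general hm h hn
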